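/- Escape along hyperbolic orbits: let (r, v) solve the Kepler dynamics on all of ℝ with ε = ½|v(0)|² − μ/|r(0)| > 0 and h = r(0) × v(0) ≠ 0. Then |r(t)| → ∞ both as t → +∞ and as t → −∞; moreover |v(t)|² = 2ε + 2μ/|r(t)| ≥ 2ε for all t, so |v(t)| → √(2ε) as t → ±∞. -/

import Mathlib

/-!
Conservation of energy gives `‖v‖² = 2ε + 2μ/‖r‖`. Differentiating `‖r‖²` twice (the
Lagrange–Jacobi identity) gives `(‖r‖²)'' = 2‖v‖² - 2μ/‖r‖ = 4ε + 2μ/‖r‖ ≥ 4ε`, so `‖r(t)‖²` lies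
above the parabola `2εt² + 2⟪r(0), v(0)⟫t + ‖r(0)‖²` and tends to infinity in both time
directions. The speed then tends to `√(2ε)` by the energy identity.
-/

open Filter Topology
open scoped RealInnerProductSpace

noncomputable def cross (a b : EuclideanSpace ℝ (Fin 3)) : EuclideanSpace ℝ (Fin 3) :=
  WithLp.toLp 2 ![a 1 * b 2 - a 2 * b 1, a 2 * b 0 - a 0 * b 2, a 0 * b 1 - a 1 * b 0]

theorem Monotone.add_mul_sub_le_of_hasDerivAt {f f' : ℝ → ℝ}
    (hf : ∀ t, HasDerivAt f (f' t) t) (hf' : Monotone f') (a t : ℝ) :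
    f a + f' a * (t - a) ≤ f t := by
  have hconv : ConvexOn ℝ Set.univ f := by
    refine Monotone.convexOn_univ_of_deriv (fun x => (hf x).differentiableAt) ?_
    rwa [show deriv f = f' from funext fun x => (hf x).deriv]
  rcases lt_trichotomy a t with hat | rfl | hta
  · have := hconv.le_slope_of_hasDerivAt trivial trivial hat (hf a)
    rw [slope_def_field, le_div_iff₀ (sub_pos.2 hat)] at this
    linarith
  · simp
  · have := hconv.slope_le_of_hasDerivAt trivial trivial hta (hf a)
    rw [slope_def_field, div_le_iff₀ (sub_pos.2 hta)] at this
    linarith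

theorem quadratic_le_of_le_hasDerivAt2 {f f' f'' : ℝ → ℝ} {c : ℝ}
    (hf : ∀ t, HasDerivAt f (f' t) t) (hf' : ∀ t, HasDerivAt f' (f'' t) t)
    (hc : ∀ t, c ≤ f'' t) (a t : ℝ) :
    f a + f' a * (t - a) + c / 2 * (t - a) ^ 2 ≤ f t := by
  have hg : ∀ s, HasDerivAt (fun s => f s - c / 2 * (s - a) ^ 2) (f' s - c * (s - a)) s :=
    fun s => ((hf s).sub ((((hasDerivAt_id' s).sub_const a).pow 2).const_mul (c / 2))).congr_deriv
      (by ring)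
  have hg' : Monotone fun s => f' s - c * (s - a) :=
    monotone_of_hasDerivAt_nonneg (f' := fun s => f'' s - c)
      (fun s => ((hf' s).sub (((hasDerivAt_id' s).sub_const a).const_mul c)).congr_deriv (by ring))
      (fun s => sub_nonneg.2 (hc s))
  have := hg'.add_mul_sub_le_of_hasDerivAt hg a t
  simp only [sub_self, mul_zero, sub_zero] at this
  linarith

theorem tendsto_quadratic_atTop {a : ℝ} (ha : 0 < a) (b c : ℝ) :
    Tendsto (fun t => a * t ^ 2 + b * t + c) atTop atTop := by
  have h : Tendsto (fun t => t * (a * t + b)) atTop atTop :=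
    tendsto_id.atTop_mul_atTop₀
      (tendsto_atTop_add_const_right _ b (tendsto_id.const_mul_atTop ha))
  exact tendsto_atTop_add_const_right _ c (h.congr fun t => by ring)

theorem tendsto_quadratic_atBot {a : ℝ} (ha : 0 < a) (b c : ℝ) :
    Tendsto (fun t => a * t ^ 2 + b * t + c) atBot atTop :=
  ((tendsto_quadratic_atTop ha (-b) c).comp tendsto_neg_atBot_atTop).congr fun t => by
    simp only [Function.comp, neg_sq, neg_mul_neg]

theorem HasDerivAt.norm {E : Type*} [NormedAddCommGroup E] [InnerProductSpace ℝ E]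
    {f : ℝ → E} {f' : E} {x : ℝ} (hf : HasDerivAt f f' x) (hx : f x ≠ 0) :
    HasDerivAt (fun t => ‖f t‖) (⟪f x, f'⟫ / ‖f x‖) x := by
  have hx' : ‖f x‖ ≠ 0 := norm_ne_zero_iff.2 hx
  have := hf.norm_sq.sqrt (by positivity)
  simp only [Real.sqrt_sq (norm_nonneg _)] at this
  convert this using 1
  field_simp

namespace Kepler

theorem tendsto_speed_of_tendsto_norm_atTop {E : Type*} [NormedAddCommGroup E] {μ ε : ℝ}
    {r v : ℝ → E} {l : Filter ℝ} (hv : ∀ t, ‖v t‖ ^ 2 = 2 * ε + 2 * μ / ‖r t‖)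
    (hl : Tendsto (fun t => ‖r t‖) l atTop) :
    Tendsto (fun t => ‖v t‖) l (𝓝 √(2 * ε)) := by
  have : Tendsto (fun t => 2 * ε + 2 * μ / ‖r t‖) l (𝓝 (2 * ε)) := by
    simpa [div_eq_mul_inv] using (hl.inv_tendsto_atTop.const_mul (2 * μ)).const_add (2 * ε)
  refine this.sqrt.congr fun t => ?_
  rw [← hv, Real.sqrt_sq (norm_nonneg _)]

variable {E : Type*} [NormedAddCommGroup E] [InnerProductSpace ℝ E] {μ ε : ℝ} {r v : ℝ → E}

theorem energy_eq (hr : ∀ t, r t ≠ 0) (hrd : ∀ t, HasDerivAt r (v t) t)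
    (hvd : ∀ t, HasDerivAt v (-(μ / ‖r t‖ ^ 3) • r t) t) (t : ℝ) :
    1 / 2 * ‖v t‖ ^ 2 - μ / ‖r t‖ = 1 / 2 * ‖v 0‖ ^ 2 - μ / ‖r 0‖ := by
  have hE : ∀ s, HasDerivAt (fun s => 1 / 2 * ‖v s‖ ^ 2 - μ / ‖r s‖) 0 s := by
    intro s
    have hrs : ‖r s‖ ≠ 0 := norm_ne_zero_iff.2 (hr s)
    refine (((hvd s).norm_sq.const_mul _).sub
      ((hasDerivAt_const s μ).div ((hrd s).norm (hr s)) hrs)).congr_deriv ?_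
    rw [inner_smul_right, real_inner_comm]
    field_simp
    ring
  exact is_const_of_deriv_eq_zero (fun s => (hE s).differentiableAt) (fun s => (hE s).deriv) t 0

theorem norm_vel_sq_eq (hr : ∀ t, r t ≠ 0) (hrd : ∀ t, HasDerivAt r (v t) t)
    (hvd : ∀ t, HasDerivAt v (-(μ / ‖r t‖ ^ 3) • r t) t)
    (hε : ε = 1 / 2 * ‖v 0‖ ^ 2 - μ / ‖r 0‖) (t : ℝ) :
    ‖v t‖ ^ 2 = 2 * ε + 2 * μ / ‖r t‖ := by
  rw [hε, ← energy_eq hr hrd hvd t]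
  ring

theorem hasDerivAt_inner (hr : ∀ t, r t ≠ 0) (hrd : ∀ t, HasDerivAt r (v t) t)
    (hvd : ∀ t, HasDerivAt v (-(μ / ‖r t‖ ^ 3) • r t) t) (t : ℝ) :
    HasDerivAt (fun s => ⟪r s, v s⟫) (‖v t‖ ^ 2 - μ / ‖r t‖) t := by
  have hrt : ‖r t‖ ≠ 0 := norm_ne_zero_iff.2 (hr t)
  refine ((hrd t).inner ℝ (hvd t)).congr_deriv ?_
  rw [inner_smul_right, real_inner_self_eq_norm_sq, real_inner_self_eq_norm_sq]
  field_simp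
  ring

theorem quadratic_le_norm_sq (hμ : 0 ≤ μ) (hr : ∀ t, r t ≠ 0)
    (hrd : ∀ t, HasDerivAt r (v t) t) (hvd : ∀ t, HasDerivAt v (-(μ / ‖r t‖ ^ 3) • r t) t)
    (hε : ε = 1 / 2 * ‖v 0‖ ^ 2 - μ / ‖r 0‖) (t : ℝ) :
    2 * ε * t ^ 2 + 2 * ⟪r 0, v 0⟫ * t + ‖r 0‖ ^ 2 ≤ ‖r t‖ ^ 2 := by
  have hρ'' : ∀ s, 4 * ε ≤ 2 * (‖v s‖ ^ 2 - μ / ‖r s‖) := fun s => by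
    rw [norm_vel_sq_eq hr hrd hvd hε s, mul_div_assoc]
    have : 0 ≤ μ / ‖r s‖ := div_nonneg hμ (norm_nonneg _)
    linarith
  have := quadratic_le_of_le_hasDerivAt2 (fun s => (hrd s).norm_sq)
    (fun s => (hasDerivAt_inner hr hrd hvd s).const_mul 2) hρ'' 0 t
  linarith

end Kepler

theorem kepler_hyperbolic_escape_general
    (μ : ℝ) (hμ : 0 < μ)
    (r v : ℝ → EuclideanSpace ℝ (Fin 3))
    (hr0 : ∀ t, r t ≠ 0)
    (hrd : ∀ t, HasDerivAt r (v t) t)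
    (hvd : ∀ t, HasDerivAt v (-(μ / ‖r t‖ ^ 3) • r t) t)
    (ε : ℝ) (hεdef : ε = (1 / 2) * ‖v 0‖ ^ 2 - μ / ‖r 0‖) (hε : 0 < ε) :
    Filter.Tendsto (fun t => ‖r t‖) Filter.atTop Filter.atTop ∧
    Filter.Tendsto (fun t => ‖r t‖) Filter.atBot Filter.atTop ∧
    (∀ t : ℝ, ‖v t‖ ^ 2 = 2 * ε + 2 * μ / ‖r t‖) ∧
    (∀ t : ℝ, 2 * ε ≤ ‖v t‖ ^ 2) ∧
    Filter.Tendsto (fun t => ‖v t‖) Filter.atTop (nhds (Real.sqrt (2 * ε))) ∧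
    Filter.Tendsto (fun t => ‖v t‖) Filter.atBot (nhds (Real.sqrt (2 * ε))) := by
  have hspeed := Kepler.norm_vel_sq_eq hr0 hrd hvd hεdef
  have hescape : ∀ l : Filter ℝ,
      Tendsto (fun t => 2 * ε * t ^ 2 + 2 * ⟪r 0, v 0⟫ * t + ‖r 0‖ ^ 2) l atTop →
      Tendsto (fun t => ‖r t‖) l atTop := fun l hl => by
    have hsq := tendsto_atTop_mono (Kepler.quadratic_le_norm_sq hμ.le hr0 hrd hvd hεdef) hl
    simpa only [Function.comp_def, Real.sqrt_sq (norm_nonneg _)]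
      using Real.tendsto_sqrt_atTop.comp hsq
  have hfuture := hescape atTop (tendsto_quadratic_atTop (by positivity) _ _)
  have hpast := hescape atBot (tendsto_quadratic_atBot (by positivity) _ _)
  refine ⟨hfuture, hpast, hspeed, fun t => ?_, Kepler.tendsto_speed_of_tendsto_norm_atTop hspeed hfuture,
    Kepler.tendsto_speed_of_tendsto_norm_atTop hspeed hpast⟩
  rw [hspeed t, mul_div_assoc]
  have : 0 < μ / ‖r t‖ := div_pos hμ (norm_pos_iff.2 (hr0 t))
  linarith

/-- Escape along hyperbolic Kepler orbits: |r(t)| → ∞ as t → ±∞; moreover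
|v(t)|² = 2ε + 2μ/|r(t)| ≥ 2ε for all t, so |v(t)| → √(2ε) as t → ±∞. -/
theorem kepler_hyperbolic_escape
    (μ : ℝ) (hμ : 0 < μ)
    (r v : ℝ → EuclideanSpace ℝ (Fin 3))
    (hr0 : ∀ t, r t ≠ 0)
    (hrd : ∀ t, HasDerivAt r (v t) t)
    (hvd : ∀ t, HasDerivAt v (-(μ / ‖r t‖ ^ 3) • r t) t)
    (ε : ℝ) (hεdef : ε = (1 / 2) * ‖v 0‖ ^ 2 - μ / ‖r 0‖) (hε : 0 < ε)
    (hh : cross (r 0) (v 0) ≠ 0) :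
    Filter.Tendsto (fun t => ‖r t‖) Filter.atTop Filter.atTop ∧
    Filter.Tendsto (fun t => ‖r t‖) Filter.atBot Filter.atTop ∧
    (∀ t : ℝ, ‖v t‖ ^ 2 = 2 * ε + 2 * μ / ‖r t‖) ∧
    (∀ t : ℝ, 2 * ε ≤ ‖v t‖ ^ 2) ∧
    Filter.Tendsto (fun t => ‖v t‖) Filter.atTop (nhds (Real.sqrt (2 * ε))) ∧
    Filter.Tendsto (fun t => ‖v t‖) Filter.atBot (nhds (Real.sqrt (2 * ε))) :=
  kepler_hyperbolic_escape_general μ hμ r v hr0 hrd hvd ε hεdef hε
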